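/- For an i.i.d. sequence with continuous CDF F and p = F(u), P(X_{-2} ≤ u, X_0 > X_{-1} > u, X_0 > X_1 > u, X_2 ≤ u) = p²q³/3, where q = 1 - p. -/

import Mathlib

/-!
The event is the intersection of `{X₋₂ ≤ u, X₂ ≤ u}`, of probability `p²`, with the event that
`X₀` is the strict maximum of `X₋₁, X₀, X₁` and all three exceed `u`; the two depend on disjoint
blocks of the sequence, hence are independent. By exchangeability the three events "`Xᵢ` is the
strict maximum of `X₋₁, X₀, X₁`, all above `u`" have the same probability, they are disjoint, and
since the law has no atoms, ties are null, so their union is a.e. the event that all three exceed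
`u`, of probability `q³`.
-/

open MeasureTheory ProbabilityTheory Set
open scoped ENNReal

theorem MeasureTheory.Measure.prod_diagonal_eq_zero {β : Type*} [MeasurableSpace β]
    [MeasurableEq β] {ν : Measure β} [SFinite ν] [NullSingletonClass ν] :
    (ν.prod ν) (diagonal β) = 0 := by
  rw [Measure.prod_apply measurableSet_diagonal]
  simp [Set.preimage, Set.diagonal]

def peakSet (u : ℝ) : Set (ℝ × ℝ × ℝ) :=
  {x | (x.2.1 < x.1 ∧ u < x.2.1) ∧ (x.2.2 < x.1 ∧ u < x.2.2)}

theorem measurableSet_peakSet (u : ℝ) : MeasurableSet (peakSet u) := by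
  unfold peakSet
  measurability

namespace ProbabilityTheory

section IID

variable {Ω ι β : Type*} [MeasurableSpace Ω] [MeasurableSpace β] {μ : Measure Ω}
  {X : ι → Ω → β} {ν : Measure β}

theorem iIndepFun.map_prodMk_eq_prod (hX : iIndepFun X μ) (hmeas : ∀ i, Measurable (X i))
    (hlaw : ∀ i, μ.map (X i) = ν) {a b : ι} (hab : a ≠ b) :
    μ.map (fun ω ↦ (X a ω, X b ω)) = ν.prod ν := by
  have := hX.isProbabilityMeasure
  rw [(indepFun_iff_map_prod_eq_prod_map_map (hmeas a).aemeasurable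
    (hmeas b).aemeasurable).mp (hX.indepFun hab), hlaw a, hlaw b]

theorem iIndepFun.map_prodMk_prodMk_eq_prod (hX : iIndepFun X μ) (hmeas : ∀ i, Measurable (X i))
    (hlaw : ∀ i, μ.map (X i) = ν) {a b c : ι} (hab : a ≠ b) (hac : a ≠ c) (hbc : b ≠ c) :
    μ.map (fun ω ↦ (X a ω, X b ω, X c ω)) = ν.prod (ν.prod ν) := by
  have := hX.isProbabilityMeasure
  have hindep : IndepFun (X a) (fun ω ↦ (X b ω, X c ω)) μ :=
    (hX.indepFun_prodMk hmeas b c a hab.symm hac.symm).symm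
  rw [(indepFun_iff_map_prod_eq_prod_map_map (hmeas a).aemeasurable
    ((hmeas b).prodMk (hmeas c)).aemeasurable).mp hindep, hlaw a,
    hX.map_prodMk_eq_prod hmeas hlaw hbc]

theorem iIndepFun.indepFun_prodMk_prodMk_prodMk (hX : iIndepFun X μ)
    (hmeas : ∀ i, Measurable (X i)) {i j k l m : ι}
    (hik : i ≠ k) (hil : i ≠ l) (him : i ≠ m) (hjk : j ≠ k) (hjl : j ≠ l) (hjm : j ≠ m) :
    IndepFun (fun ω ↦ (X i ω, X j ω)) (fun ω ↦ (X k ω, X l ω, X m ω)) μ := by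
  classical
  have hST : Disjoint ({i, j} : Finset ι) {k, l, m} := by simp [*, eq_comm]
  have hpair : Measurable fun v : ({i, j} : Finset ι) → β ↦
      (v ⟨i, by simp⟩, v ⟨j, by simp⟩) := by fun_prop
  have htriple : Measurable fun v : ({k, l, m} : Finset ι) → β ↦
      (v ⟨k, by simp⟩, v ⟨l, by simp⟩, v ⟨m, by simp⟩) := by fun_prop
  exact (hX.indepFun_finset _ _ hST hmeas).comp hpair htriple

theorem iIndepFun.ae_ne [MeasurableEq β] [NullSingletonClass ν] (hX : iIndepFun X μ)
    (hmeas : ∀ i, Measurable (X i)) (hlaw : ∀ i, μ.map (X i) = ν) {a b : ι} (hab : a ≠ b) :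
    ∀ᵐ ω ∂μ, X a ω ≠ X b ω := by
  have := hX.isProbabilityMeasure
  have : IsProbabilityMeasure ν :=
    hlaw a ▸ Measure.isProbabilityMeasure_map (hmeas a).aemeasurable
  have hnull := Measure.prod_diagonal_eq_zero (ν := ν)
  rw [← hX.map_prodMk_eq_prod hmeas hlaw hab,
    Measure.map_apply ((hmeas a).prodMk (hmeas b)) measurableSet_diagonal] at hnull
  exact ae_iff.2 (by simpa [Set.preimage, Set.diagonal] using hnull)

end IID

section Peak

variable {Ω ι : Type*} [MeasurableSpace Ω] {μ : Measure Ω} {X : ι → Ω → ℝ} {ν : Measure ℝ}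

theorem iIndepFun.measure_preimage_peakSet [NullSingletonClass ν]
    (hX : iIndepFun X μ) (hmeas : ∀ i, Measurable (X i)) (hlaw : ∀ i, μ.map (X i) = ν)
    {a b c : ι} (hab : a ≠ b) (hac : a ≠ c) (hbc : b ≠ c) (u : ℝ) :
    μ ((fun ω ↦ (X a ω, X b ω, X c ω)) ⁻¹' peakSet u) = ν (Ioi u) ^ 3 / 3 := by
  have := hX.isProbabilityMeasure
  have : IsProbabilityMeasure ν :=
    hlaw a ▸ Measure.isProbabilityMeasure_map (hmeas a).aemeasurable
  set P : ι → ι → ι → Set Ω := fun a b c ↦ (fun ω ↦ (X a ω, X b ω, X c ω)) ⁻¹' peakSet u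
  have hP : ∀ {a b c}, a ≠ b → a ≠ c → b ≠ c → μ (P a b c) = ν.prod (ν.prod ν) (peakSet u) := by
    intro a b c hab hac hbc
    rw [← hX.map_prodMk_prodMk_eq_prod hmeas hlaw hab hac hbc,
      Measure.map_apply (by fun_prop) (measurableSet_peakSet u)]
  have hbox : μ ((fun ω ↦ (X a ω, X b ω, X c ω)) ⁻¹' (Ioi u ×ˢ Ioi u ×ˢ Ioi u)) =
      ν (Ioi u) ^ 3 := by
    rw [← Measure.map_apply (by fun_prop) (by measurability),
      hX.map_prodMk_prodMk_eq_prod hmeas hlaw hab hac hbc, Measure.prod_prod, Measure.prod_prod]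
    ring
  have hae : (fun ω ↦ (X a ω, X b ω, X c ω)) ⁻¹' (Ioi u ×ˢ Ioi u ×ˢ Ioi u) =ᵐ[μ]
      (P a b c ∪ P b a c ∪ P c a b : Set Ω) := by
    refine Filter.eventuallyEq_set.2 ?_
    filter_upwards [hX.ae_ne hmeas hlaw hab, hX.ae_ne hmeas hlaw hac, hX.ae_ne hmeas hlaw hbc]
      with ω h1 h2 h3
    simp only [P, peakSet, mem_union, mem_preimage, mem_prod, mem_Ioi, mem_ofPred_eq]
    -- off the ties, exactly one of the three values is the strict maximum
    grind
  have hdisj₁ : Disjoint (P a b c) (P b a c) :=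
    Set.disjoint_left.2 fun ω h h' ↦ h.1.1.asymm h'.1.1
  have hdisj₂ : Disjoint (P a b c ∪ P b a c) (P c a b) :=
    Set.disjoint_left.2 fun ω h h' ↦
      h.elim (fun h ↦ h.2.1.asymm h'.1.1) (fun h ↦ h.2.1.asymm h'.2.1)
  have hmeasP : ∀ a b c, MeasurableSet (P a b c) := fun a b c ↦
    (measurableSet_peakSet u).preimage (by fun_prop)
  rw [ENNReal.eq_div_iff three_ne_zero ENNReal.ofNat_ne_top, ← hbox, measure_congr hae,
    measure_union hdisj₂ (hmeasP c a b), measure_union hdisj₁ (hmeasP b a c), hP hab hac hbc,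
    hP hab.symm hbc hac, hP hac.symm hbc.symm hab]
  ring

end Peak

end ProbabilityTheory

theorem prob_interior_peak_cluster_three_general
    {Ω : Type*} [MeasurableSpace Ω] (μ : Measure Ω)
    (X : ℤ → Ω → ℝ) (hmeas : ∀ t, Measurable (X t))
    (hindep : iIndepFun (m := fun _ : ℤ => (inferInstance : MeasurableSpace ℝ)) X μ)
    (hident : ∀ t : ℤ, IdentDistrib (X t) (X 0) μ μ)
    (hcont : ∀ x : ℝ, μ {ω | X 0 ω = x} = 0)
    (u : ℝ) (p q : ℝ≥0∞)
    (hp : μ {ω | X 0 ω ≤ u} = p) (hq : q = 1 - p) :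
    μ {ω | X (-2) ω ≤ u ∧ (X (-1) ω < X 0 ω ∧ u < X (-1) ω) ∧
        (X 1 ω < X 0 ω ∧ u < X 1 ω) ∧ X 2 ω ≤ u}
      = p ^ 2 * q ^ 3 / 3 := by
  set ν := μ.map (X 0)
  have hlaw (t : ℤ) : μ.map (X t) = ν := (hident t).map_eq
  have := hindep.isProbabilityMeasure
  have : IsProbabilityMeasure ν := Measure.isProbabilityMeasure_map (hmeas 0).aemeasurable
  have : NullSingletonClass ν :=
    ⟨fun x ↦ by rw [Measure.map_apply (hmeas 0) (measurableSet_singleton x)]; exact hcont x⟩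
  have hνp : ν (Iic u) = p := by rwa [Measure.map_apply (hmeas 0) measurableSet_Iic]
  have hνq : ν (Ioi u) = q := by
    rw [← compl_Iic, prob_compl_eq_one_sub measurableSet_Iic, hνp, hq]
  have hevent : {ω | X (-2) ω ≤ u ∧ (X (-1) ω < X 0 ω ∧ u < X (-1) ω) ∧
      (X 1 ω < X 0 ω ∧ u < X 1 ω) ∧ X 2 ω ≤ u} =
      (fun ω ↦ (X (-2) ω, X 2 ω)) ⁻¹' (Iic u ×ˢ Iic u) ∩
        (fun ω ↦ (X 0 ω, X (-1) ω, X 1 ω)) ⁻¹' peakSet u := by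
    ext ω
    simp only [peakSet, mem_ofPred_eq, mem_inter_iff, mem_preimage, mem_prod, mem_Iic]
    tauto
  have hpair : μ ((fun ω ↦ (X (-2) ω, X 2 ω)) ⁻¹' (Iic u ×ˢ Iic u)) = p ^ 2 := by
    rw [← Measure.map_apply (by fun_prop) (measurableSet_Iic.prod measurableSet_Iic),
      hindep.map_prodMk_eq_prod hmeas hlaw (by decide), Measure.prod_prod, hνp, sq]
  rw [hevent, (hindep.indepFun_prodMk_prodMk_prodMk hmeas (by decide) (by decide) (by decide)
      (by decide) (by decide) (by decide)).measure_inter_preimage_eq_mul _ _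
      (measurableSet_Iic.prod measurableSet_Iic) (measurableSet_peakSet u), hpair,
    hindep.measure_preimage_peakSet hmeas hlaw (by decide) (by decide) (by decide), hνq,
    mul_div_assoc]

/-- For an i.i.d. sequence with continuous CDF and `p = P(X 0 ≤ u)`,
`q = 1 - p`, one has
`P(X_{-2} ≤ u, X_0 > X_{-1} > u, X_0 > X_1 > u, X_2 ≤ u) = p²q³/3`. -/
theorem prob_interior_peak_cluster_three
    {Ω : Type*} [MeasurableSpace Ω] (μ : Measure Ω) [IsProbabilityMeasure μ]
    (X : ℤ → Ω → ℝ) (hmeas : ∀ t, Measurable (X t))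
    (hindep : iIndepFun (m := fun _ : ℤ => (inferInstance : MeasurableSpace ℝ)) X μ)
    (hident : ∀ t : ℤ, IdentDistrib (X t) (X 0) μ μ)
    (hcont : ∀ x : ℝ, μ {ω | X 0 ω = x} = 0)
    (u : ℝ) (p q : ℝ≥0∞)
    (hp : μ {ω | X 0 ω ≤ u} = p) (hq : q = 1 - p) :
    μ {ω | X (-2) ω ≤ u ∧ (X (-1) ω < X 0 ω ∧ u < X (-1) ω) ∧
        (X 1 ω < X 0 ω ∧ u < X 1 ω) ∧ X 2 ω ≤ u}
      = p ^ 2 * q ^ 3 / 3 :=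
  prob_interior_peak_cluster_three_general μ X hmeas hindep hident hcont u p q hp hq
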